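/- Let λ, α ∈ ℂ \ {0} and β ∈ ℂ. Define operators on ℂ[s,t]: E_i(g)(s,t) = λ^i α(t/2 + β)g(s−i, t−2) and F_j(g)(s,t) = −(λ^j/α)(t/2 − β)g(s−j, t+2). Then for all i, j ∈ ℤ and g ∈ ℂ[s,t], (E_i ∘ F_j − F_j ∘ E_i)(g)(s,t) = λ^{i+j}·t·g(s−i−j, t). -/

import Mathlib

open MvPolynomial

abbrev R2 : Type := MvPolynomial (Fin 2) ℂ

/-- Substitution `g(s,t) ↦ g(s - u, t + v)`. -/
noncomputable def sh (u v : ℂ) : R2 →ₐ[ℂ] R2 := aeval ![X 0 - C u, X 1 + C v]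

/-- Action of `e_i` in `Θ(λ,α,β,γ)`. -/
noncomputable def thE (lam a b : ℂ) (i : ℤ) (g : R2) : R2 :=
  C (lam ^ i * a) * (C 2⁻¹ * X 1 + C b) * sh (i : ℂ) (-2) g

/-- Action of `f_i` in `Θ(λ,α,β,γ)`. -/
noncomputable def thF (lam a b : ℂ) (i : ℤ) (g : R2) : R2 :=
  C (-(lam ^ i / a)) * (C 2⁻¹ * X 1 - C b) * sh (i : ℂ) 2 g

/-- Action of `h_i`. -/
noncomputable def opH (lam : ℂ) (i : ℤ) (g : R2) : R2 :=
  C (lam ^ i) * X 1 * sh (i : ℂ) 0 g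

/-!
Both composites `E_i ∘ F_j` and `F_j ∘ E_i` shift `g` by `(i + j, 0)` and carry the scalar
`λ^i α · (-λ^j / α) = -λ^(i+j)`; they differ only in the polynomial factor, and
`(t/2 + β)(t/2 - β - 1) - (t/2 - β)(t/2 + β + 1) = -t`.
-/

@[simp]
lemma sh_X_one (u v : ℂ) : sh u v (X 1) = X 1 + C v := by simp [sh]

@[simp]
lemma sh_C (u v c : ℂ) : sh u v (C c) = C c := (sh u v).commutes c

lemma sh_comp_sh (u v u' v' : ℂ) : (sh u v).comp (sh u' v') = sh (u + u') (v + v') := by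
  refine algHom_ext fun k => ?_
  fin_cases k <;> simp [sh] <;> ring

lemma sh_sh (u v u' v' : ℂ) (g : R2) : sh u v (sh u' v' g) = sh (u + u') (v + v') g :=
  AlgHom.congr_fun (sh_comp_sh u v u' v') g

lemma C_half_mul_two : (C 2⁻¹ : R2) * 2 = 1 := by
  rw [← map_ofNat C 2, ← C_mul, inv_mul_cancel₀ two_ne_zero, C_1]

lemma thE_thF (lam a b : ℂ) (i j : ℤ) (g : R2) :
    thE lam a b i (thF lam a b j g) = C (lam ^ i * a) * C (-(lam ^ j / a)) *
      ((C 2⁻¹ * X 1 + C b) * (C 2⁻¹ * X 1 - C b - 1)) * sh ((i + j : ℤ) : ℂ) 0 g := by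
  have hC : (C (-2 : ℂ) : R2) = -2 := by rw [map_neg, map_ofNat]
  simp only [thE, thF, map_mul (sh _ _), map_sub, sh_C, sh_X_one, sh_sh, Int.cast_add,
    neg_add_cancel, hC]
  linear_combination -(C (lam ^ i * a) * C (-(lam ^ j / a)) * (C 2⁻¹ * X 1 + C b) *
    sh (i + j : ℂ) 0 g) * C_half_mul_two

lemma thF_thE (lam a b : ℂ) (i j : ℤ) (g : R2) :
    thF lam a b j (thE lam a b i g) = C (lam ^ i * a) * C (-(lam ^ j / a)) *
      ((C 2⁻¹ * X 1 - C b) * (C 2⁻¹ * X 1 + C b + 1)) * sh ((i + j : ℤ) : ℂ) 0 g := by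
  simp only [thE, thF, map_mul (sh _ _), map_add, sh_C, sh_X_one, sh_sh, Int.cast_add,
    add_neg_cancel, add_comm (j : ℂ), map_ofNat]
  linear_combination C (lam ^ i * a) * C (-(lam ^ j / a)) * (C 2⁻¹ * X 1 - C b) *
    sh (i + j : ℂ) 0 g * C_half_mul_two

lemma half_X_one_identity (b : ℂ) :
    ((C 2⁻¹ * X 1 + C b) * (C 2⁻¹ * X 1 - C b - 1) -
      (C 2⁻¹ * X 1 - C b) * (C 2⁻¹ * X 1 + C b + 1) : R2) = -X 1 := by
  linear_combination (-X 1 : R2) * C_half_mul_two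

theorem stmt17 (lam a : ℂ) (hlam : lam ≠ 0) (ha : a ≠ 0) (b : ℂ) (i j : ℤ)
    (g : R2) :
    thE lam a b i (thF lam a b j g) - thF lam a b j (thE lam a b i g)
      = opH lam (i + j) g := by
  have hcoef : (C (lam ^ i * a) * C (-(lam ^ j / a)) : R2) = -C (lam ^ (i + j)) := by
    rw [← C_mul, ← map_neg, zpow_add₀ hlam]
    field_simp
  rw [thE_thF, thF_thE, hcoef, opH]
  linear_combination -C (lam ^ (i + j)) * sh ((i + j : ℤ) : ℂ) 0 g * half_X_one_identity b
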